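/- arXiv:1504.05011 — 6 statements merged into one kernel-verified Lean document; each statement's English description precedes it below -/
import Mathlib

section
/- Let F ∈ ℂ[x_1,...,x_{n+1}] be a nonzero homogeneous polynomial of degree d ≥ 3, and let a, b be nonnegative integers with 2a + b ≤ n. Suppose there exist a + b distinct variables x_{i_1},...,x_{i_{a+b}} such that F lies in the ideal (x_{i_1},...,x_{i_a}) + (x_{i_{a+1}},...,x_{i_{a+b}})^2. Then the hypersurface {F = 0} ⊆ ℙ^n is not smooth, i.e., there exists a nonzero point of ℂ^{n+1} at which all partial derivatives ∂F/∂x_k vanish. -/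
open MvPolynomial

section Aux

variable {σ : Type*} {R : Type*} [CommSemiring R]

lemma homComp_mul {e : ℕ} {h : MvPolynomial σ R} (hh : h.IsHomogeneous e)
    (c : MvPolynomial σ R) (t : ℕ) :
    homogeneousComponent (t + e) (c * h) = homogeneousComponent t c * h := by
  conv_lhs => rw [← sum_homogeneousComponent c]
  rw [Finset.sum_mul, map_sum]
  rw [Finset.sum_eq_single t]
  · rw [homogeneousComponent_of_mem
      (((homogeneousComponent_isHomogeneous t c).mul hh : _)), if_pos rfl]
  · intro i _ hit
    rw [homogeneousComponent_of_mem
      (((homogeneousComponent_isHomogeneous i c).mul hh : _)), if_neg (by omega)]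
  · intro ht
    simp only [Finset.mem_range, not_lt] at ht
    rw [homogeneousComponent_eq_zero t c (by omega), zero_mul, map_zero]

lemma homComp_mul_lt {e : ℕ} {h : MvPolynomial σ R} (hh : h.IsHomogeneous e)
    (c : MvPolynomial σ R) (t : ℕ) (ht : t < e) :
    homogeneousComponent t (c * h) = 0 := by
  conv_lhs => rw [← sum_homogeneousComponent c]
  rw [Finset.sum_mul, map_sum]
  refine Finset.sum_eq_zero fun i _ => ?_
  rw [homogeneousComponent_of_mem
    (((homogeneousComponent_isHomogeneous i c).mul hh : _)), if_neg (by omega)]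

end Aux

section Key

lemma degree_equivFun {k : ℕ} (γ : Fin k → ℕ) :
    (Finsupp.equivFunOnFinite.symm γ).degree = ∑ i, γ i := by
  rw [Finsupp.degree]
  refine Finset.sum_subset (Finset.subset_univ _) fun x _ hx => ?_
  simpa using Finsupp.notMem_support_iff.mp hx

lemma degree_eq_sum {k : ℕ} (β : Fin k →₀ ℕ) : β.degree = ∑ i, β i := by
  rw [Finsupp.degree]
  refine Finset.sum_subset (Finset.subset_univ _) fun x _ hx => ?_
  simpa using Finsupp.notMem_support_iff.mp hx

lemma key {m a : ℕ} (ham : a < m) {e : ℕ} (he : 2 ≤ e)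
    (h : Fin a → MvPolynomial (Fin m) ℂ) (hh : ∀ j, (h j).IsHomogeneous e) :
    ∃ q : Fin m → ℂ, q ≠ 0 ∧ ∀ j, eval q (h j) = 0 := by
  classical
  rcases Nat.eq_zero_or_pos a with rfl | ha
  · refine ⟨fun _ => 1, fun h0 => ?_, fun j => j.elim0⟩
    have := congrFun h0 ⟨0, by omega⟩
    simp at this
  by_contra hcon
  push_neg at hcon
  have hq0 : ∀ q : Fin m → ℂ, (∀ j, eval q (h j) = 0) → q = 0 := by
    intro q hq
    by_contra hne
    obtain ⟨j, hj⟩ := hcon q hne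
    exact hj (hq j)
  set I : Ideal (MvPolynomial (Fin m) ℂ) := Ideal.span (Set.range h) with hI
  -- every variable is in the radical
  have hrad : ∀ i : Fin m, ∃ N, X i ^ N ∈ I := by
    intro i
    have hzl : ∀ x ∈ MvPolynomial.zeroLocus ℂ I, x = 0 := by
      intro x hx
      refine hq0 x fun j => ?_
      exact (MvPolynomial.mem_zeroLocus_iff.mp hx) _ (Ideal.subset_span (Set.mem_range_self j))
    have : (X i : MvPolynomial (Fin m) ℂ) ∈ I.radical := by
      rw [← MvPolynomial.vanishingIdeal_zeroLocus_eq_radical (K := ℂ)]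
      rw [MvPolynomial.mem_vanishingIdeal_iff]
      intro x hx
      rw [aeval_X, hzl x hx]
      rfl
    exact this
  choose Nf hNf using hrad
  set N : ℕ := Finset.univ.sup Nf with hN
  have hXN : ∀ i : Fin m, (X i : MvPolynomial (Fin m) ℂ) ^ N ∈ I := by
    intro i
    have hle : Nf i ≤ N := Finset.le_sup (Finset.mem_univ i)
    have : (X i : MvPolynomial (Fin m) ℂ) ^ N
        = X i ^ Nf i * X i ^ (N - Nf i) := by rw [← pow_add]; congr 1; omega
    rw [this]
    exact I.mul_mem_right _ (hNf i)
  set D : ℕ := m * N + 1 with hD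
  -- monomials of degree ≥ D are in I
  have hmonD : ∀ (β : Fin m →₀ ℕ), D ≤ β.degree → ∀ c : ℂ, monomial β c ∈ I := by
    intro β hβ c
    have hex : ∃ i, N ≤ β i := by
      by_contra hno
      push_neg at hno
      have : β.degree ≤ m * N := by
        rw [degree_eq_sum]
        calc ∑ i, β i ≤ ∑ _i : Fin m, N := Finset.sum_le_sum fun i _ => (hno i).le
        _ = m * N := by simp [mul_comm]
      omega
    obtain ⟨i, hi⟩ := hex
    have hle : Finsupp.single i N ≤ β := Finsupp.single_le_iff.mpr hi
    have : monomial β c = monomial (β - Finsupp.single i N) c * X i ^ N := by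
      rw [X_pow_eq_monomial, monomial_mul, tsub_add_cancel_of_le hle, mul_one]
    rw [this]
    exact I.mul_mem_left _ (hXN i)
  have hfI : ∀ (f : MvPolynomial (Fin m) ℂ) (t : ℕ), f.IsHomogeneous t → D ≤ t → f ∈ I := by
    intro f t hf hDt
    rw [f.as_sum]
    refine Ideal.sum_mem I fun β hβ => hmonD β ?_ _
    have : β.degree = t := by
      rw [Finsupp.degree_eq_weight_one]
      exact hf (mem_support_iff.mp hβ)
    omega
  -- homogeneous representation
  have hrep : ∀ (r : ℕ) (f : MvPolynomial (Fin m) ℂ), f.IsHomogeneous (D + (r+1)*e) →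
      ∃ g : Fin a → MvPolynomial (Fin m) ℂ,
        (∀ j, (g j).IsHomogeneous (D + r*e)) ∧ f = ∑ j, g j * h j := by
    intro r f hf
    obtain ⟨c, hc⟩ := Ideal.mem_span_range_iff_exists_fun.mp
      (hfI f _ hf (Nat.le_add_right _ _))
    refine ⟨fun j => homogeneousComponent (D + r*e) (c j),
      fun j => homogeneousComponent_isHomogeneous _ _, ?_⟩
    have h1 : f = homogeneousComponent (D + (r+1)*e) f := by
      rw [homogeneousComponent_of_mem hf, if_pos rfl]
    have h2 : D + (r+1)*e = (D + r*e) + e := by ring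
    calc f = homogeneousComponent (D + (r+1)*e) f := h1
      _ = homogeneousComponent (D + (r+1)*e) (∑ j, c j * h j) := by rw [hc]
      _ = ∑ j, homogeneousComponent (D + (r+1)*e) (c j * h j) := map_sum _ _ _
      _ = ∑ j, homogeneousComponent (D + r*e) (c j) * h j := by
          refine Finset.sum_congr rfl fun j _ => ?_
          rw [h2, homComp_mul (hh j)]
  -- span sets and induction
  set T : ℕ → Finset (MvPolynomial (Fin m) ℂ) := fun r =>
    ((Finset.Nat.antidiagonalTuple a r) ×ˢ (Finset.Nat.antidiagonalTuple m D)).image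
      (fun p => monomial (Finsupp.equivFunOnFinite.symm p.2) 1 * ∏ j, h j ^ p.1 j) with hT
  have hW : ∀ (r : ℕ) (f : MvPolynomial (Fin m) ℂ), f.IsHomogeneous (D + r*e) →
      f ∈ Submodule.span ℂ ((T r : Set (MvPolynomial (Fin m) ℂ))) := by
    intro r
    induction r with
    | zero =>
      intro f hf
      rw [f.as_sum]
      refine Submodule.sum_mem _ fun β hβ => ?_
      have hdeg : β.degree = D := by
        rw [Finsupp.degree_eq_weight_one]
        have := hf (mem_support_iff.mp hβ)
        exact this.trans (by simp)
      have hmono : monomial β (coeff β f)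
          = (coeff β f) • (monomial β 1 : MvPolynomial (Fin m) ℂ) := by
        rw [smul_monomial, smul_eq_mul, mul_one]
      rw [hmono]
      refine Submodule.smul_mem _ _ (Submodule.subset_span ?_)
      rw [hT]
      simp only [Finset.coe_image, Set.mem_image, Finset.mem_coe, Finset.mem_product]
      refine ⟨((0 : Fin a → ℕ), fun i => β i), ⟨?_, ?_⟩, ?_⟩
      · simp [Finset.Nat.mem_antidiagonalTuple]
      · rw [Finset.Nat.mem_antidiagonalTuple]
        rw [degree_eq_sum] at hdeg
        exact hdeg
      · simp
    | succ r ih =>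
      intro f hf
      have h2 : D + (r+1)*e = D + r*e + e := by ring
      obtain ⟨g, hg, hfg⟩ := hrep r f hf
      rw [hfg]
      refine Submodule.sum_mem _ fun j _ => ?_
      have hgj := ih (g j) (hg j)
      have hmul : ∀ x ∈ Submodule.span ℂ ((T r : Set (MvPolynomial (Fin m) ℂ))),
          x * h j ∈ Submodule.span ℂ ((T (r+1) : Set (MvPolynomial (Fin m) ℂ))) := by
        intro x hx
        refine Submodule.span_induction ?_ ?_ ?_ ?_ hx
        · rintro y hy
          rw [hT] at hy
          simp only [Finset.coe_image, Set.mem_image, Finset.mem_coe,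
            Finset.mem_product] at hy
          obtain ⟨⟨α, β⟩, ⟨hα, hβ⟩, rfl⟩ := hy
          set δ : Fin a → ℕ := fun i => if i = j then 1 else 0 with hδ
          have hprod : (∏ i, h i ^ α i) * h j = ∏ i, h i ^ (α i + δ i) := by
            simp only [pow_add]
            rw [Finset.prod_mul_distrib]
            congr 1
            rw [Finset.prod_eq_single j (fun i _ hij => by simp [hδ, hij]) (by simp)]
            simp [hδ]
          refine Submodule.subset_span ?_
          rw [hT]
          simp only [Finset.coe_image, Set.mem_image, Finset.mem_coe, Finset.mem_product]
          refine ⟨(fun i => α i + δ i, β), ⟨?_, hβ⟩, ?_⟩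
          · rw [Finset.Nat.mem_antidiagonalTuple] at hα ⊢
            rw [Finset.sum_add_distrib, hα]
            simp [hδ, Finset.sum_ite_eq']
          · rw [mul_assoc, hprod]
        · rw [zero_mul]; exact Submodule.zero_mem _
        · intro y z _ _ hy hz; rw [add_mul]; exact Submodule.add_mem _ hy hz
        · intro c' y _ hy; rw [smul_mul_assoc]; exact Submodule.smul_mem _ _ hy
      exact hmul _ hgj
  -- counting
  set K : ℕ := (Finset.Nat.antidiagonalTuple m D).card with hK
  set tt : ℕ := D + K * e with htt
  set S2 : Finset (Fin a → ℕ) :=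
    (Finset.range (2*K+1)).biUnion (fun s => Finset.Nat.antidiagonalTuple a s) with hS2
  have hmemS2 : ∀ γ : Fin a → ℕ, γ ∈ S2 ↔ ∑ i, γ i ≤ 2*K := by
    intro γ
    rw [hS2, Finset.mem_biUnion]
    constructor
    · rintro ⟨s, hs, hγ⟩
      rw [Finset.Nat.mem_antidiagonalTuple] at hγ
      rw [Finset.mem_range] at hs
      omega
    · intro hγ
      exact ⟨∑ i, γ i, Finset.mem_range.mpr (by omega),
        Finset.Nat.mem_antidiagonalTuple.mpr rfl⟩
  set j0 : Fin a := ⟨0, ha⟩ with hj0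
  set ia : Fin m := ⟨a, ham⟩ with hia
  have haam : a ≤ m := ham.le
  set E : (Fin a → ℕ) → (Fin m →₀ ℕ) := fun γ =>
    (∑ j : Fin a, Finsupp.single (Fin.castLE haam j) (γ j))
      + Finsupp.single ia (tt - ∑ i, γ i) with hE
  have hEcoord : ∀ (γ : Fin a → ℕ) (i : Fin m),
      E γ i = (∑ j : Fin a, if Fin.castLE haam j = i then γ j else 0)
        + (if ia = i then tt - ∑ k, γ k else 0) := by
    intro γ i
    rw [hE]
    simp only [Finsupp.add_apply, Finsupp.finset_sum_apply, Finsupp.single_apply]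
  have hdegE : ∀ γ : Fin a → ℕ, ∑ i, γ i ≤ tt → (E γ).degree = tt := by
    intro γ hγ
    rw [degree_eq_sum]
    calc ∑ i, E γ i
        = ∑ i, ((∑ j : Fin a, if Fin.castLE haam j = i then γ j else 0)
          + (if ia = i then tt - ∑ k, γ k else 0)) :=
          Finset.sum_congr rfl fun i _ => hEcoord γ i
      _ = (∑ i, ∑ j : Fin a, if Fin.castLE haam j = i then γ j else 0)
          + ∑ i, (if ia = i then tt - ∑ k, γ k else 0) := Finset.sum_add_distrib
      _ = (∑ j : Fin a, γ j) + (tt - ∑ k, γ k) := by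
          rw [Finset.sum_comm]
          simp [Finset.sum_ite_eq, Finset.sum_ite_eq']
      _ = tt := by omega
  have hEapp : ∀ (γ : Fin a → ℕ) (j : Fin a), E γ (Fin.castLE haam j) = γ j := by
    intro γ j
    rw [hEcoord]
    rw [if_neg (by
      intro hcontra
      have h2 := congrArg Fin.val hcontra
      rw [Fin.coe_castLE] at h2
      rw [hia] at h2
      simp at h2
      omega), add_zero]
    rw [Finset.sum_eq_single j (fun j' _ hjj => by
      rw [if_neg]
      intro hcc
      have h3 := congrArg Fin.val hcc
      rw [Fin.coe_castLE, Fin.coe_castLE] at h3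
      exact hjj (Fin.ext h3)) (by simp)]
    simp
  -- linear independence
  have hv : LinearIndependent ℂ (fun γ : ↥S2 => (monomial (E γ.1) (1:ℂ))) := by
    have hinj : Function.Injective (fun γ : ↥S2 => E γ.1) := by
      intro γ1 γ2 heq
      apply Subtype.ext
      funext j
      have := congrArg (fun F : Fin m →₀ ℕ => F (Fin.castLE haam j)) heq
      simpa [hEapp] using this
    have := (basisMonomials (Fin m) ℂ).linearIndependent.comp _ hinj
    rw [coe_basisMonomials] at this; exact this
  have hrange : ∀ γ : ↥S2, (monomial (E γ.1) (1:ℂ))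
      ∈ Submodule.span ℂ ((T K : Set (MvPolynomial (Fin m) ℂ))) := by
    intro γ
    have hsum : ∑ i, γ.1 i ≤ 2*K := (hmemS2 γ.1).mp γ.2
    have hKe : 2*K ≤ K * e := by
      have := Nat.mul_le_mul_left K he
      omega
    refine hW K _ ?_
    have : (E γ.1).degree = tt := hdegE γ.1 (by omega)
    exact isHomogeneous_monomial _ this
  have hcard1 : S2.card ≤ (T K).card := by
    have := linearIndependent_le_span' _ hv ((T K : Set (MvPolynomial (Fin m) ℂ)))
      (by rintro _ ⟨γ, rfl⟩; exact hrange γ)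
    simp only [Cardinal.mk_coe_finset, Finset.coe_sort_coe, Fintype.card_coe,
      Nat.cast_le] at this
    exact this
  have hcard2 : (T K).card ≤ (Finset.Nat.antidiagonalTuple a K).card * K := by
    refine (Finset.card_image_le).trans ?_
    rw [Finset.card_product]
  set cA : ℕ := (Finset.Nat.antidiagonalTuple a K).card with hcA
  have hcA1 : 1 ≤ cA := by
    refine Finset.card_pos.mpr ⟨fun i => if i = j0 then K else 0, ?_⟩
    rw [Finset.Nat.mem_antidiagonalTuple]
    simp [Finset.sum_ite_eq']
  have hlow : (K+1) * cA ≤ S2.card := by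
    have hinj := Finset.card_le_card_of_injOn
      (f := fun p : ℕ × (Fin a → ℕ) => fun i => p.2 i + (if i = j0 then p.1 else 0))
      (s := (Finset.range (K+1)) ×ˢ Finset.Nat.antidiagonalTuple a K) (t := S2) ?_ ?_
    · calc (K+1) * cA = ((Finset.range (K+1)) ×ˢ Finset.Nat.antidiagonalTuple a K).card := by
            rw [Finset.card_product, Finset.card_range]
        _ ≤ S2.card := hinj
    · rintro ⟨i, α⟩ hp
      simp only [Finset.coe_product, Set.mem_prod, Finset.mem_coe, Finset.mem_range, Finset.Nat.mem_antidiagonalTuple] at hp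
      rw [Finset.mem_coe, hmemS2]
      rw [Finset.sum_add_distrib, hp.2]
      simp only [Finset.sum_ite_eq', Finset.mem_univ, if_pos]
      omega
    · rintro ⟨i1, α1⟩ hp1 ⟨i2, α2⟩ hp2 heq
      simp only [Finset.coe_product, Set.mem_prod, Finset.mem_coe, Finset.mem_range,
        Finset.Nat.mem_antidiagonalTuple] at hp1 hp2
      have hsum := congrArg (fun γ : Fin a → ℕ => ∑ i, γ i) heq
      simp only [Finset.sum_add_distrib, hp1.2, hp2.2, Finset.sum_ite_eq',
        Finset.mem_univ, if_pos] at hsum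
      have hii : i1 = i2 := by omega
      subst hii
      have hα : α1 = α2 := by
        funext i
        have := congrFun heq i
        simp only at this
        omega
      rw [hα]
  have hfinal : (K+1) * cA ≤ cA * K := by
    calc (K+1) * cA ≤ S2.card := hlow
      _ ≤ (T K).card := hcard1
      _ ≤ cA * K := hcard2
  have hexp : (K+1) * cA = K * cA + cA := by ring
  rw [hexp, mul_comm cA K] at hfinal
  omega

end Key


/-- if a nonzero homogeneous F of degree d ≥ 3 lies in
(x_{i_1},...,x_{i_a}) + (x_{i_{a+1}},...,x_{i_{a+b}})² with 2a+b ≤ n, then the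
hypersurface {F = 0} ⊆ ℙⁿ is not smooth. -/
theorem stmt_1 {n d : ℕ} (hd : 3 ≤ d) (F : MvPolynomial (Fin (n + 1)) ℂ)
    (hF0 : F ≠ 0) (hFh : F.IsHomogeneous d)
    (a b : ℕ) (hab : 2 * a + b ≤ n)
    (ι : Fin (a + b) → Fin (n + 1)) (hι : Function.Injective ι)
    (hmem : F ∈ Ideal.span ((fun k => (X (ι k) : MvPolynomial (Fin (n + 1)) ℂ)) ''
        {k | (k : ℕ) < a})
      + (Ideal.span ((fun k => (X (ι k) : MvPolynomial (Fin (n + 1)) ℂ)) ''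
        {k | a ≤ (k : ℕ)})) ^ 2) :
    ∃ p : Fin (n + 1) → ℂ, p ≠ 0 ∧ ∀ k, eval p (pderiv k F) = 0 := by
  classical
  set m : ℕ := n + 1 - (a + b) with hm
  have hcard_range : Fintype.card ↥(Set.range ι) = a + b := by
    rw [← Fintype.card_congr (Equiv.ofInjective ι hι)]
    simp
  have hmcard : Fintype.card {k : Fin (n+1) // k ∉ Set.range ι} = m := by
    rw [Fintype.card_subtype_compl, hcard_range, Fintype.card_fin]
  have ham : a < m := by omega
  let ε : {k : Fin (n+1) // k ∉ Set.range ι} ≃ Fin m := Fintype.equivFinOfCardEq hmcard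
  set φ : Fin (n+1) → MvPolynomial (Fin m) ℂ :=
    fun k => if hk : k ∈ Set.range ι then 0 else X (ε ⟨k, hk⟩) with hφdef
  have hφ : ∀ k, (φ k).IsHomogeneous 1 := by
    intro k
    by_cases hk : k ∈ Set.range ι
    · simp only [hφdef, dif_pos hk]
      exact (homogeneousSubmodule (Fin m) ℂ 1).zero_mem
    · simp only [hφdef, dif_neg hk]
      exact isHomogeneous_X _ _
  set J : Ideal (MvPolynomial (Fin (n + 1)) ℂ) :=
    Ideal.span ((fun k => (X (ι k) : MvPolynomial (Fin (n + 1)) ℂ)) ''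
      {k | a ≤ (k : ℕ)}) with hJ
  obtain ⟨A, hA, Q, hQ, hAQ⟩ := Submodule.mem_sup.mp hmem
  have hseteq : ((fun k => (X (ι k) : MvPolynomial (Fin (n + 1)) ℂ)) '' {k | (k : ℕ) < a})
      = Set.range (fun j : Fin a =>
        (X (ι (Fin.castLE (Nat.le_add_right a b) j)) : MvPolynomial (Fin (n+1)) ℂ)) := by
    ext x
    constructor
    · rintro ⟨k, hk, rfl⟩
      exact ⟨⟨k.1, hk⟩, rfl⟩
    · rintro ⟨j, rfl⟩
      exact ⟨Fin.castLE (Nat.le_add_right a b) j, by simpa using j.2, rfl⟩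
  rw [hseteq] at hA
  obtain ⟨c, hc⟩ := Ideal.mem_span_range_iff_exists_fun.mp hA
  set G : Fin a → MvPolynomial (Fin (n + 1)) ℂ :=
    fun j => homogeneousComponent (d-1) (c j) with hG
  have hGρ : ∀ j, ((aeval φ) (G j)).IsHomogeneous (d-1) := by
    intro j
    have := (homogeneousComponent_isHomogeneous (d-1) (c j)).aeval φ hφ
    simpa using this
  obtain ⟨q, hq0, hqz⟩ := key ham (show 2 ≤ d-1 by omega) (fun j => aeval φ (G j)) hGρ
  set p : Fin (n+1) → ℂ :=
    fun k => if hk : k ∈ Set.range ι then 0 else q (ε ⟨k, hk⟩) with hp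
  have hp0 : p ≠ 0 := by
    obtain ⟨i, hi⟩ : ∃ i, q i ≠ 0 := by
      by_contra hcc
      push_neg at hcc
      exact hq0 (funext hcc)
    intro hpz
    apply hi
    have h1 : p (ε.symm i).1 = 0 := congrFun hpz _
    have h2 : ((ε.symm i : {k : Fin (n+1) // k ∉ Set.range ι}) : Fin (n+1)) ∉ Set.range ι :=
      (ε.symm i).2
    simp only [hp, dif_neg h2, Subtype.coe_eta, Equiv.apply_symm_apply] at h1
    exact h1
  have hpι : ∀ k : Fin (a+b), p (ι k) = 0 := by
    intro k
    rw [hp]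
    exact dif_pos ⟨k, rfl⟩
  have hevalcomp : ∀ g : MvPolynomial (Fin (n+1)) ℂ, eval p g = eval q (aeval φ g) := by
    intro g
    have hhom : (eval q).comp ((aeval φ : MvPolynomial (Fin (n+1)) ℂ →ₐ[ℂ]
        MvPolynomial (Fin m) ℂ) : MvPolynomial (Fin (n+1)) ℂ →+* MvPolynomial (Fin m) ℂ)
        = (eval p : MvPolynomial (Fin (n+1)) ℂ →+* ℂ) := by
      apply MvPolynomial.ringHom_ext
      · intro r
        simp
      · intro k
        simp only [RingHom.comp_apply, RingHom.coe_coe, aeval_X, eval_X]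
        by_cases hk : k ∈ Set.range ι
        · simp only [hφdef, hp, dif_pos hk, map_zero]
        · simp only [hφdef, hp, dif_neg hk, eval_X]
    exact (RingHom.congr_fun hhom g).symm
  have hGp : ∀ j, eval p (G j) = 0 := by
    intro j
    rw [hevalcomp]
    exact hqz j
  have hJp : ∀ u ∈ J, eval p u = 0 := by
    intro u hu
    have hle : J ≤ RingHom.ker (eval p : MvPolynomial (Fin (n+1)) ℂ →+* ℂ) := by
      rw [hJ, Ideal.span_le]
      rintro x ⟨k, hk, rfl⟩
      simp only [SetLike.mem_coe, RingHom.mem_ker, eval_X]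
      exact hpι k
    exact RingHom.mem_ker.mp (hle hu)
  -- homogeneous components of elements of J stay in J
  have hL1 : ∀ u ∈ J, ∀ t : ℕ, homogeneousComponent t u ∈ J := by
    intro u hu t
    obtain ⟨cc, hccsupp, hccsum⟩ := Submodule.mem_span_set.mp hu
    rw [← hccsum, Finsupp.sum, map_sum]
    refine Ideal.sum_mem _ fun x hx => ?_
    have hxs := hccsupp hx
    have hx1 : x.IsHomogeneous 1 := by
      obtain ⟨k, hk, rfl⟩ := hxs
      exact isHomogeneous_X _ _
    cases t with
    | zero =>
      rw [smul_eq_mul, homComp_mul_lt hx1 _ 0 (by omega)]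
      exact J.zero_mem
    | succ t' =>
      rw [smul_eq_mul, homComp_mul hx1 (cc x) t']
      exact J.mul_mem_left _ (Ideal.subset_span hxs)
  have hQ2 : Q ∈ J * J := by
    rw [← pow_two]
    exact hQ
  have hQ' : homogeneousComponent d Q ∈ J * J := by
    refine Submodule.mul_induction_on hQ2 ?_ ?_
    · intro u hu v hv
      have hsplit : homogeneousComponent d (u * v)
          = ∑ i ∈ Finset.range (u.totalDegree+1), ∑ jj ∈ Finset.range (v.totalDegree+1),
            homogeneousComponent d (homogeneousComponent i u * homogeneousComponent jj v) := by
        calc homogeneousComponent d (u * v)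
            = homogeneousComponent d
              ((∑ i ∈ Finset.range (u.totalDegree+1), homogeneousComponent i u)
              * (∑ jj ∈ Finset.range (v.totalDegree+1), homogeneousComponent jj v)) := by
              rw [sum_homogeneousComponent, sum_homogeneousComponent]
          _ = _ := by
              rw [Finset.sum_mul_sum, map_sum]
              exact Finset.sum_congr rfl fun i _ => map_sum _ _ _
      rw [hsplit]
      refine Submodule.sum_mem _ fun i _ => Submodule.sum_mem _ fun jj _ => ?_
      rw [homogeneousComponent_of_mem
        (((homogeneousComponent_isHomogeneous i u).mul
          (homogeneousComponent_isHomogeneous jj v) : _))]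
      split
      · exact Submodule.mul_mem_mul (hL1 u hu i) (hL1 v hv jj)
      · exact Submodule.zero_mem _
    · intro x y hx hy
      rw [map_add]
      exact Submodule.add_mem _ hx hy
  -- decomposition of F
  have hFd : homogeneousComponent d F = F := by
    rw [homogeneousComponent_of_mem hFh, if_pos rfl]
  have hd1 : d - 1 + 1 = d := by omega
  have hAd : homogeneousComponent d A
      = ∑ j, G j * X (ι (Fin.castLE (Nat.le_add_right a b) j)) := by
    rw [← hc, map_sum]
    refine Finset.sum_congr rfl fun j _ => ?_
    rw [← hd1, homComp_mul (isHomogeneous_X _ _)]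
  have hFdec : F = (∑ j, G j * X (ι (Fin.castLE (Nat.le_add_right a b) j)))
      + homogeneousComponent d Q := by
    conv_lhs => rw [← hFd, ← hAQ]
    rw [map_add, hAd]
  refine ⟨p, hp0, fun k => ?_⟩
  have hterm1 : eval p (pderiv k (∑ j, G j * X (ι (Fin.castLE (Nat.le_add_right a b) j)))) = 0 := by
    rw [map_sum, map_sum]
    refine Finset.sum_eq_zero fun j _ => ?_
    rw [pderiv_mul, map_add, map_mul, map_mul, eval_X, hpι, mul_zero, hGp, zero_mul, add_zero]
  have hterm2 : eval p (pderiv k (homogeneousComponent d Q)) = 0 := by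
    refine Submodule.mul_induction_on hQ' ?_ ?_
    · intro u hu v hv
      rw [pderiv_mul, map_add, map_mul, map_mul, hJp u hu, hJp v hv, mul_zero, zero_mul,
        add_zero]
    · intro x y hx hy
      rw [map_add, map_add, hx, hy, add_zero]
  rw [hFdec, map_add, map_add, hterm1, hterm2, add_zero]
end

section
/- Let F ∈ ℂ[x_1,...,x_{n+1}] be a homogeneous polynomial of degree d ≥ 3 defining a smooth hypersurface M = {F = 0} ⊆ ℙ^n. Then for every index i with 1 ≤ i ≤ n+1 there exists an index j = j(i) such that the monomial x_i^{d-1} x_j appears with nonzero coefficient in F. -/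
open MvPolynomial

/-- a homogeneous F of degree d ≥ 3 defining a smooth hypersurface
contains, for each variable x_i, a monomial x_i^{d-1} x_j with nonzero coefficient. -/
theorem stmt_2 {n d : ℕ} (hd : 3 ≤ d) (F : MvPolynomial (Fin (n + 1)) ℂ)
    (hFh : F.IsHomogeneous d)
    (hsm : ∀ p : Fin (n + 1) → ℂ, (∀ k, eval p (pderiv k F) = 0) → p = 0) :
    ∀ i : Fin (n + 1), ∃ j : Fin (n + 1),
      coeff (Finsupp.single i (d - 1) + Finsupp.single j 1) F ≠ 0 := by
  intro i
  by_contra hcon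
  push_neg at hcon
  set p : Fin (n + 1) → ℂ := fun l => if l = i then 1 else 0 with hp
  have hp0 : p ≠ 0 := by
    intro h
    have := congrFun h i
    simp [hp] at this
  apply hp0
  apply hsm
  intro k
  conv_lhs => rw [F.as_sum, map_sum, map_sum]
  apply Finset.sum_eq_zero
  intro m hm
  rw [pderiv_monomial, eval_monomial]
  have hmc : coeff m F ≠ 0 := mem_support_iff.mp hm
  have hdeg : m.degree = d := by
    by_contra h
    exact hmc (hFh.coeff_eq_zero h)
  by_cases hmk : m k = 0
  · simp [hmk]
  by_cases hsup : ∀ l, l ≠ i → (m - Finsupp.single k 1 : Fin (n + 1) →₀ ℕ) l = 0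
  · -- then m = single i (d-1) + single k 1, so coeff m F = 0
    have hml : ∀ l, l ≠ i → l ≠ k → m l = 0 := by
      intro l hli hlk
      have := hsup l hli
      simpa [Finsupp.single_apply, hlk.symm, Ne.symm hlk] using this
    have hme : m = Finsupp.single i (d - 1) + Finsupp.single k 1 := by
      by_cases hk : k = i
      · subst hk
        have hm1 : m = Finsupp.single k (m k) := by
          ext l
          by_cases hl : l = k
          · simp [hl]
          · simp [Finsupp.single_apply, Ne.symm hl, hml l hl hl]
        have hdk : m k = d := by
          rw [hm1] at hdeg
          simpa [Finsupp.degree_apply, Finsupp.support_single_ne_zero _ hmk] using hdeg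
        rw [hm1, hdk, ← Finsupp.single_add]
        congr 1
        omega
      · have hmk1' : m k = 1 := by
          have h := hsup k hk
          simp [Finsupp.single_apply] at h
          omega
        have hik : i ≠ k := fun h => hk h.symm
        have hdik : m i + m k = d := by
          have h1 : m.degree = ∑ l ∈ Finset.univ, m l := by
            rw [Finsupp.degree]
            exact Finset.sum_subset (Finset.subset_univ _)
              (fun x _ hx => Finsupp.notMem_support_iff.mp hx)
          have h2 : ∑ l ∈ ({i, k} : Finset (Fin (n + 1))), m l = ∑ l ∈ Finset.univ, m l :=
            Finset.sum_subset (Finset.subset_univ _)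
              (fun x _ hx => by
                simp only [Finset.mem_insert, Finset.mem_singleton, not_or] at hx
                exact hml x hx.1 hx.2)
          rw [h1, ← h2, Finset.sum_pair hik] at hdeg
          exact hdeg
        have hmi : m i = d - 1 := by omega
        ext l
        by_cases hli : l = i
        · simp [hli, Finsupp.single_apply, hk, hmi]
        · by_cases hlk : l = k
          · subst hlk
            simp [Finsupp.single_apply, hik, hmk1']
          · simp [Finsupp.single_apply, Ne.symm hli, Ne.symm hlk, hml l hli hlk]
    rw [hme, hcon k]
    ring
  · -- the product vanishes
    push_neg at hsup
    obtain ⟨l, hli, hql⟩ := hsup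
    have : ((m - Finsupp.single k 1).prod fun n e => p n ^ e) = 0 := by
      apply Finset.prod_eq_zero (Finsupp.mem_support_iff.mpr hql)
      rw [hp]
      simp [hli]
      exact hql
    rw [this]
    ring
end

section
/- Let G be a finite group whose order is p^α · n with gcd(p, n) = 1, for a prime p. If a Sylow p-subgroup P of G is abelian and the order of the automorphism group Aut(P) is coprime to n, then G has a normal p-complement, i.e., a normal subgroup N of order n with G = N ⋊ P. -/
/-- if a Sylow p-subgroup P of a finite group G of order p^α·n (with
gcd(p,n)=1) is abelian and |Aut(P)| is coprime to n, then G has a normal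
p-complement, i.e. a normal subgroup N of order n with G = N ⋊ P. -/
theorem stmt_6 {G : Type*} [Group G] [Finite G] (p : ℕ) [Fact p.Prime]
    (α n : ℕ) (hcard : Nat.card G = p ^ α * n) (hcop : Nat.Coprime p n)
    (P : Sylow p G)
    (hab : ∀ x y : ↥(P : Subgroup G), x * y = y * x)
    (hAut : Nat.Coprime (Nat.card (MulAut ↥(P : Subgroup G))) n) :
    ∃ N : Subgroup G, N.Normal ∧ Nat.card N = n ∧ N.IsComplement' ↑P := by
  set H : Subgroup G := (P : Subgroup G)
  have hHcomm : IsMulCommutative H := ⟨⟨hab⟩⟩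
  -- card H = p ^ α
  have hcardH : Nat.card H = p ^ α := by
    rw [P.card_eq_multiplicity, hcard]
    congr 1
    have hn0 : n ≠ 0 := by
      rintro rfl
      exact absurd (hcard ▸ Nat.card_pos) (by simp)
    rw [Nat.factorization_mul (pow_ne_zero α (Nat.Prime.pos Fact.out).ne') hn0,
      Nat.Prime.factorization_pow (Fact.out)]
    simp [Nat.factorization_eq_zero_of_not_dvd
      (fun h => Nat.Prime.one_lt (Fact.out) |>.ne' (Nat.Coprime.eq_one_of_dvd hcop h))]
  have hpow_pos : 0 < p ^ α := pow_pos (Nat.Prime.pos Fact.out) α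
  have hindex : H.index = n := by
    have := H.card_mul_index
    rw [hcardH, hcard] at this
    exact Nat.eq_of_mul_eq_mul_left hpow_pos this
  -- normalizer ≤ centralizer
  have hP : (Subgroup.normalizer (H : Set G)) ≤ Subgroup.centralizer (H : Set G) := by
    have hker : (Subgroup.normalizerMonoidHom H).ker =
        (Subgroup.centralizer (H : Set G)).subgroupOf (Subgroup.normalizer (H : Set G)) :=
      Subgroup.normalizerMonoidHom_ker H
    -- the range has card dividing both |Aut H| and n
    have h1 : Nat.card (Subgroup.normalizerMonoidHom H).range ∣
        Nat.card (MulAut H) :=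
      Subgroup.card_subgroup_dvd_card _
    have h2 : Nat.card (Subgroup.normalizerMonoidHom H).range ∣ n := by
      rw [← Subgroup.index_ker, hker]
      have hle : H.subgroupOf (Subgroup.normalizer (H : Set G)) ≤
          (Subgroup.centralizer (H : Set G)).subgroupOf (Subgroup.normalizer (H : Set G)) :=
        Subgroup.comap_mono (Subgroup.le_centralizer H)
      calc ((Subgroup.centralizer (H : Set G)).subgroupOf (Subgroup.normalizer (H : Set G))).index
          ∣ (H.subgroupOf (Subgroup.normalizer (H : Set G))).index := Subgroup.index_dvd_of_le hle
        _ ∣ H.index :=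
            Subgroup.relIndex_dvd_index_of_le Subgroup.le_normalizer
        _ = n := hindex
    have hone : Nat.card (Subgroup.normalizerMonoidHom H).range = 1 :=
      Nat.eq_one_of_dvd_coprimes hAut h1 h2
    have hbot : (Subgroup.normalizerMonoidHom H).range = ⊥ :=
      Subgroup.eq_bot_of_card_eq _ hone
    intro g hg
    have : (⟨g, hg⟩ : (Subgroup.normalizer (H : Set G))) ∈ (Subgroup.normalizerMonoidHom H).ker := by
      have := (Subgroup.eq_bot_iff_forall _).mp hbot
        (Subgroup.normalizerMonoidHom H ⟨g, hg⟩) ⟨_, rfl⟩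
      simpa [MonoidHom.mem_ker] using this
    rw [hker] at this
    exact this
  have hcompl := MonoidHom.ker_transferSylow_isComplement' P hP
  refine ⟨(MonoidHom.transferSylow P hP).ker, MonoidHom.normal_ker _, ?_, hcompl⟩
  have := hcompl.card_mul
  rw [hcardH, hcard, mul_comm (p ^ α) n] at this
  exact Nat.eq_of_mul_eq_mul_right hpow_pos this
end

section
/- The quintic polynomial F = (x_1^4 + x_2^4 + (2+4ω^2)x_1^2x_2^2)·x_3 + (x_1^4 + x_2^4 − (2+4ω^2)x_1^2x_2^2)·x_4 + x_3^4 x_4 + x_4^4 x_3 + x_5^5, where ω = e^{2πi/3}, defines a SINGULAR hypersurface in ℙ^4: there is a point of ℙ^4 at which all five partial derivatives of F vanish. -/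
open MvPolynomial

/-- the quintic
(x₁⁴+x₂⁴+(2+4ω²)x₁²x₂²)x₃ + (x₁⁴+x₂⁴−(2+4ω²)x₁²x₂²)x₄ + x₃⁴x₄ + x₄⁴x₃ + x₅⁵,
ω = e^{2πi/3}, is singular: all five partial derivatives vanish at some nonzero point. -/
theorem stmt_14 (ω : ℂ) (hω : ω = Complex.exp (2 * Real.pi * Complex.I / 3))
    (F : MvPolynomial (Fin 5) ℂ)
    (hF : F = (X 0 ^ 4 + X 1 ^ 4 + C (2 + 4 * ω ^ 2) * X 0 ^ 2 * X 1 ^ 2) * X 2 +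
      (X 0 ^ 4 + X 1 ^ 4 - C (2 + 4 * ω ^ 2) * X 0 ^ 2 * X 1 ^ 2) * X 3 +
      X 2 ^ 4 * X 3 + X 3 ^ 4 * X 2 + X 4 ^ 5) :
    ∃ p : Fin 5 → ℂ, p ≠ 0 ∧ ∀ k, eval p (pderiv k F) = 0 := by
  set a : ℂ := (((3 : ℝ) ^ ((4 : ℝ)⁻¹) : ℝ) : ℂ) with ha_def
  have ha4 : a ^ 4 = 3 := by
    rw [ha_def]
    norm_cast
    rw [show ((3:ℝ) ^ ((4:ℝ)⁻¹)) ^ (4:ℕ) = ((3:ℝ) ^ (((4:ℕ):ℝ)⁻¹)) ^ (4:ℕ) by norm_num]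
    exact Real.rpow_inv_natCast_pow (by norm_num) (by norm_num)
  refine ⟨![a, 0, 1, -1, 0], ?_, ?_⟩
  · intro h
    have h2 : (![a, 0, 1, -1, 0] : Fin 5 → ℂ) 2 = 0 := by rw [h]; rfl
    simp at h2
  · intro k
    fin_cases k <;>
      simp [hF, pderiv_mul, pderiv_X, Pi.single_apply] <;> ring_nf <;>
      simp [ha4] <;> ring
end

section
/- Let A = diag(ζ, ζ^{-4}, ζ^{16}, ζ^{18}, ζ^{10}) where ζ = e^{2πi/41}. A degree-5 monomial x_1^{i_1}x_2^{i_2}x_3^{i_3}x_4^{i_4}x_5^{i_5} with i_1+⋯+i_5 = 5 is A-invariant if and only if i_1 − 4i_2 + 16i_3 + 18i_4 + 10i_5 ≡ 0 (mod 41). The only such monomials are x_1^4x_2, x_2^4x_3, x_3^4x_4, x_4^4x_5, x_5^4x_1, and x_1x_2x_3x_4x_5. -/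
set_option maxHeartbeats 1000000 in
set_option synthInstance.maxHeartbeats 400000 in
set_option synthInstance.maxSize 2048 in
private lemma stmt_18_aux : ∀ a b c d e : Fin 6, a.val+b.val+c.val+d.val+e.val = 5 →
    (a.val+16*c.val+18*d.val+10*e.val) % 41 = (4*b.val) % 41 →
    ((a.val=4∧b.val=1∧c.val=0∧d.val=0∧e.val=0) ∨ (a.val=0∧b.val=4∧c.val=1∧d.val=0∧e.val=0) ∨
     (a.val=0∧b.val=0∧c.val=4∧d.val=1∧e.val=0) ∨ (a.val=0∧b.val=0∧c.val=0∧d.val=4∧e.val=1) ∨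
     (a.val=1∧b.val=0∧c.val=0∧d.val=0∧e.val=4) ∨ (a.val=1∧b.val=1∧c.val=1∧d.val=1∧e.val=1)) := by
  decide

/-- for A = diag(ζ, ζ⁻⁴, ζ¹⁶, ζ¹⁸, ζ¹⁰) with ζ = e^{2πi/41}, a degree-5
monomial with exponent vector i is A-invariant iff
i₁ − 4i₂ + 16i₃ + 18i₄ + 10i₅ ≡ 0 (mod 41), and the only such monomials are
x₁⁴x₂, x₂⁴x₃, x₃⁴x₄, x₄⁴x₅, x₅⁴x₁ and x₁x₂x₃x₄x₅. -/
theorem stmt_18 (ζ : ℂ) (hζ : ζ = Complex.exp (2 * Real.pi * Complex.I / 41))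
    (d : Fin 5 → ℂ) (hd : d = ![ζ, ζ ^ (-4 : ℤ), ζ ^ 16, ζ ^ 18, ζ ^ 10])
    (i : Fin 5 → ℕ) (hsum : ∑ k, i k = 5) :
    ((∏ k, d k ^ i k = 1) ↔
      (41 : ℤ) ∣ ((i 0 : ℤ) - 4 * (i 1 : ℤ) + 16 * (i 2 : ℤ) + 18 * (i 3 : ℤ) +
        10 * (i 4 : ℤ))) ∧
    ((∏ k, d k ^ i k = 1) ↔
      (i = ![4, 1, 0, 0, 0] ∨ i = ![0, 4, 1, 0, 0] ∨ i = ![0, 0, 4, 1, 0] ∨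
        i = ![0, 0, 0, 4, 1] ∨ i = ![1, 0, 0, 0, 4] ∨ i = ![1, 1, 1, 1, 1])) := by
  have hprim : IsPrimitiveRoot ζ 41 := by
    rw [hζ]; exact Complex.isPrimitiveRoot_exp 41 (by norm_num)
  have hne : ζ ≠ 0 := hprim.ne_zero (by norm_num)
  have hprod : (∏ k, d k ^ i k)
      = ζ ^ ((i 0 : ℤ) - 4 * (i 1 : ℤ) + 16 * (i 2 : ℤ) + 18 * (i 3 : ℤ) + 10 * (i 4 : ℤ)) := by
    subst hd
    rw [Fin.prod_univ_five]
    simp only [Matrix.cons_val_zero, Matrix.cons_val_one, Matrix.head_cons,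
      Matrix.cons_val_two, Matrix.tail_cons, Matrix.cons_val_three, Matrix.cons_val_four,
      Matrix.head_fin_const]
    rw [← zpow_natCast ζ (i 0), ← zpow_natCast ζ 16, ← zpow_natCast ζ 18, ← zpow_natCast ζ 10,
      ← zpow_natCast (ζ ^ (-4:ℤ)) (i 1), ← zpow_natCast (ζ ^ ((16:ℕ):ℤ)) (i 2),
      ← zpow_natCast (ζ ^ ((18:ℕ):ℤ)) (i 3), ← zpow_natCast (ζ ^ ((10:ℕ):ℤ)) (i 4),
      ← zpow_mul, ← zpow_mul, ← zpow_mul, ← zpow_mul,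
      ← zpow_add₀ hne, ← zpow_add₀ hne, ← zpow_add₀ hne, ← zpow_add₀ hne]
    ring_nf
  have h1 : (∏ k, d k ^ i k = 1) ↔
      (41 : ℤ) ∣ ((i 0 : ℤ) - 4 * (i 1 : ℤ) + 16 * (i 2 : ℤ) + 18 * (i 3 : ℤ) +
        10 * (i 4 : ℤ)) := by
    rw [hprod]
    exact hprim.zpow_eq_one_iff_dvd _
  refine ⟨h1, ?_⟩
  have h5 : i 0 + i 1 + i 2 + i 3 + i 4 = 5 := by simpa [Fin.sum_univ_five] using hsum
  have key : ∀ a b c d e : ℕ, (i = ![a, b, c, d, e]) ↔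
      (i 0 = a ∧ i 1 = b ∧ i 2 = c ∧ i 3 = d ∧ i 4 = e) := by
    intro a b c d e
    constructor
    · intro h; subst h; simp
    · rintro ⟨h0, h1, h2, h3, h4⟩
      funext k; fin_cases k <;> simp_all
  rw [h1, key, key, key, key, key, key]
  constructor
  · intro hdvd
    have := stmt_18_aux ⟨i 0, by omega⟩ ⟨i 1, by omega⟩ ⟨i 2, by omega⟩ ⟨i 3, by omega⟩
      ⟨i 4, by omega⟩ (by simp only [Fin.val_mk]; omega) (by simp only [Fin.val_mk]; omega)
    simp only [Fin.val_mk] at this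
    exact this
  · rintro (h | h | h | h | h | h) <;> omega
end

section
/- There is no diagonal matrix A = diag(1, η, η^{a_3}, η^{a_4}, η^{a_5}) with η = e^{2πi/25} of order 25 and integers a_3, a_4, a_5, together with a homogeneous degree-5 polynomial F ∈ ℂ[x_1,...,x_5] defining a smooth hypersurface, such that x_1^5 ∈ F and A(F) = F. Concretely: if x_1^5 has nonzero coefficient in F, A(F) = F, and the chain of invariance conditions forces (up to reordering coordinates) A = diag(1, η, η^{-4}, η^{16}, η^{11}), then no monomial x_5^4 x_i is in F for any i, contradicting smoothness. -/
open MvPolynomial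

/-- The action of a matrix on a polynomial by linear substitution of the variables. -/
noncomputable def matAct (A : Matrix (Fin 5) (Fin 5) ℂ) (F : MvPolynomial (Fin 5) ℂ) :
    MvPolynomial (Fin 5) ℂ :=
  aeval (fun k => ∑ i, C (A k i) * X i) F

lemma matAct_diagonal (d : Fin 5 → ℂ) (F : MvPolynomial (Fin 5) ℂ) :
    matAct (Matrix.diagonal d) F = aeval (fun k => C (d k) * X k) F := by
  unfold matAct
  have h : (fun k => ∑ i, C (Matrix.diagonal d k i) * X i : Fin 5 → MvPolynomial (Fin 5) ℂ)
      = fun k => C (d k) * X k := by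
    funext k
    rw [Finset.sum_eq_single k]
    · simp
    · intro i _ hik
      simp [Matrix.diagonal_apply, Ne.symm hik]
    · simp
  rw [h]

lemma aeval_scale (d : Fin 5 → ℂ) (v : Fin 5 →₀ ℕ) (c : ℂ) :
    (aeval (fun k => C (d k) * X k) (monomial v c) : MvPolynomial (Fin 5) ℂ)
      = monomial v (c * ∏ k, d k ^ v k) := by
  rw [aeval_monomial, monomial_eq, Finsupp.prod, Finsupp.prod]
  simp_rw [mul_pow, ← map_pow (C : ℂ →+* MvPolynomial (Fin 5) ℂ)]
  rw [Finset.prod_mul_distrib, ← map_prod]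
  have h : ∏ k ∈ v.support, d k ^ v k = ∏ k, d k ^ v k :=
    Finset.prod_subset (Finset.subset_univ _)
      (fun x _ hx => by simp [Finsupp.notMem_support_iff.mp hx])
  rw [h, map_mul, MvPolynomial.algebraMap_eq]
  ring

lemma coeff_matAct_diagonal (d : Fin 5 → ℂ) (m : Fin 5 →₀ ℕ) (F : MvPolynomial (Fin 5) ℂ) :
    coeff m (matAct (Matrix.diagonal d) F) = (∏ k, d k ^ m k) * coeff m F := by
  rw [matAct_diagonal]
  conv_lhs => rw [F.as_sum]
  rw [map_sum, coeff_sum]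
  simp_rw [aeval_scale, coeff_monomial]
  rw [Finset.sum_ite_eq' F.support m (fun v => coeff v F * ∏ k, d k ^ v k)]
  by_cases hm : m ∈ F.support
  · rw [if_pos hm]; ring
  · rw [if_neg hm, MvPolynomial.notMem_support_iff.mp hm, mul_zero]


lemma exists_coeff_ne (F : MvPolynomial (Fin 5) ℂ) (hFh : F.IsHomogeneous 5)
    (hsm : ∀ p : Fin 5 → ℂ, (∀ k, eval p (pderiv k F) = 0) → p = 0) (i : Fin 5) :
    ∃ j, coeff (Finsupp.single i 4 + Finsupp.single j 1) F ≠ 0 := by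
  by_contra hcon
  push_neg at hcon
  have hp : (Pi.single i 1 : Fin 5 → ℂ) = 0 := by
    apply hsm
    intro k
    conv_lhs => rw [F.as_sum]
    rw [map_sum, map_sum]
    refine Finset.sum_eq_zero fun m hm => ?_
    rw [pderiv_monomial, eval_monomial]
    by_cases hmk : m k = 0
    · simp [hmk]
    by_cases hj : ∀ j, j ≠ i → m j ≤ Finsupp.single k 1 j
    · -- m = single i 4 + single k 1
      have hm5 : ∑ j, m j = 5 := by
        have h := hFh (MvPolynomial.mem_support_iff.mp hm)
        rw [Finsupp.weight_apply] at h
        simp only [Finsupp.sum, smul_eq_mul, Pi.one_apply, mul_one] at h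
        rw [← Finset.sum_subset (Finset.subset_univ m.support)
          (fun x _ hx => Finsupp.notMem_support_iff.mp hx)]
        exact h
      have hmeq : m = Finsupp.single i 4 + Finsupp.single k 1 := by
        have hj' : ∀ j, j ≠ i → j ≠ k → m j = 0 := by
          intro j hji hjk
          have := hj j hji
          simpa [Finsupp.single_apply, Ne.symm hjk] using this
        by_cases hki : k = i
        · subst hki
          have hsum : ∑ j, m j = m k :=
            Finset.sum_eq_single k (fun j _ hjk => hj' j hjk hjk) (by simp)
          have hmi : m k = 5 := by rw [hsum] at hm5; exact hm5
          ext j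
          by_cases hjk : j = k
          · subst hjk; simp [hmi]
          · have := hj' j hjk hjk
            simp [Finsupp.single_apply, Ne.symm hjk, this]
        · have hmk1 : m k = 1 := by
            have := hj k hki
            simp only [Finsupp.single_eq_same] at this
            omega
          have hsum : ∑ j, m j = ∑ j ∈ ({i, k} : Finset (Fin 5)), m j :=
            (Finset.sum_subset (Finset.subset_univ _) (by
              intro x _ hx
              simp only [Finset.mem_insert, Finset.mem_singleton, not_or] at hx
              exact hj' x hx.1 hx.2)).symm
          rw [Finset.sum_pair (Ne.symm hki)] at hsum
          have hmi : m i = 4 := by rw [hsum, hmk1] at hm5; omega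
          ext j
          by_cases hji : j = i
          · subst hji
            simp [Finsupp.single_apply, hki, hmi]
          by_cases hjk : j = k
          · subst hjk
            simp [Finsupp.single_apply, Ne.symm hki, hmk1]
          · have := hj' j hji hjk
            simp [Finsupp.single_apply, Ne.symm hji, Ne.symm hjk, this]
      rw [hmeq, hcon k]
      simp
    · push_neg at hj
      obtain ⟨j, hji, hjm⟩ := hj
      have hjm' : (m - Finsupp.single k 1 : Fin 5 →₀ ℕ) j ≠ 0 := by
        rw [Finsupp.tsub_apply]
        omega
      rw [Finsupp.prod]
      rw [Finset.prod_eq_zero (Finsupp.mem_support_iff.mpr hjm')]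
      · simp
      · rw [Pi.single_eq_of_ne hji]
        exact zero_pow hjm'
  have := congrFun hp i
  simp at this


lemma weight_dvd (η : ℂ) (hη : η = Complex.exp (2 * Real.pi * Complex.I / 25))
    (a₃ a₄ a₅ : ℕ) (i j : Fin 5) (F : MvPolynomial (Fin 5) ℂ)
    (hc : coeff (Finsupp.single i 4 + Finsupp.single j 1) F ≠ 0)
    (hkey : coeff (Finsupp.single i 4 + Finsupp.single j 1) F
      = (∏ k, (![1, η, η ^ a₃, η ^ a₄, η ^ a₅] : Fin 5 → ℂ) k
          ^ (Finsupp.single i 4 + Finsupp.single j 1 : Fin 5 →₀ ℕ) k)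
        * coeff (Finsupp.single i 4 + Finsupp.single j 1) F) :
    (25:ℕ) ∣ 4 * (![0, 1, a₃, a₄, a₅] : Fin 5 → ℕ) i + (![0, 1, a₃, a₄, a₅] : Fin 5 → ℕ) j := by
  set w : Fin 5 → ℕ := ![0, 1, a₃, a₄, a₅] with hw
  have hd : ∀ k, (![1, η, η ^ a₃, η ^ a₄, η ^ a₅] : Fin 5 → ℂ) k = η ^ w k := by
    intro k; fin_cases k <;> simp [hw]
  have hprod : (∏ k, (![1, η, η ^ a₃, η ^ a₄, η ^ a₅] : Fin 5 → ℂ) k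
      ^ (Finsupp.single i 4 + Finsupp.single j 1 : Fin 5 →₀ ℕ) k) = 1 := by
    exact mul_right_cancel₀ hc (by rw [one_mul]; exact hkey.symm)
  simp_rw [hd, ← pow_mul] at hprod
  rw [Finset.prod_pow_eq_pow_sum] at hprod
  have hsum : ∑ k, w k * (Finsupp.single i 4 + Finsupp.single j 1 : Fin 5 →₀ ℕ) k
      = 4 * w i + w j := by
    simp only [Finsupp.add_apply, Finsupp.single_apply, mul_add, Finset.sum_add_distrib,
      mul_ite, mul_zero, mul_one]
    rw [Finset.sum_ite_eq, Finset.sum_ite_eq]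
    simp [mul_comm]
  rw [hsum] at hprod
  have hprim : IsPrimitiveRoot η 25 := by
    rw [hη]
    exact_mod_cast Complex.isPrimitiveRoot_exp 25 (by norm_num)
  exact (hprim.pow_eq_one_iff_dvd _).mp hprod


lemma arith (s : Fin 5 → ZMod 25) (h0 : s 0 = 0) (h1 : s 1 = 1)
    (P : ∀ i, ∃ j, 4 * s i + s j = 0) : False := by
  have h25 : (25 : ZMod 25) = 0 := by decide
  obtain ⟨j, hj⟩ := P 1
  rw [h1] at hj
  have hj' : s j = 21 := by linear_combination hj - h25
  obtain ⟨k, hk⟩ := P j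
  rw [hj'] at hk
  have hk' : s k = 16 := by linear_combination hk - 4 * h25
  obtain ⟨l, hl⟩ := P k
  rw [hk'] at hl
  have hl' : s l = 11 := by linear_combination hl - 3 * h25
  obtain ⟨t, ht⟩ := P l
  rw [hl'] at ht
  have ht' : s t = 6 := by linear_combination ht - 2 * h25
  set f : Fin 6 → Fin 5 := ![0, 1, j, k, l, t] with hf
  set g : Fin 6 → ZMod 25 := ![0, 1, 21, 16, 11, 6] with hg
  have hsf : ∀ a, s (f a) = g a := by
    intro a
    fin_cases a <;> first | exact h0 | exact h1 | exact hj' | exact hk' | exact hl' | exact ht'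
  have hginj : Function.Injective g := by decide
  have hfinj : Function.Injective f := by
    intro a b hab
    apply hginj
    rw [← hsf a, ← hsf b, hab]
  have := Fintype.card_le_of_injective f hfinj
  simp at this

/-- there is no diagonal matrix A = diag(1, η, η^{a₃}, η^{a₄}, η^{a₅}),
η = e^{2πi/25}, of order 25 together with a smooth quintic F containing x₁⁵ and
satisfying A(F) = F. -/
theorem stmt_19 (η : ℂ) (hη : η = Complex.exp (2 * Real.pi * Complex.I / 25))
    (a₃ a₄ a₅ : ℕ)
    (A : Matrix (Fin 5) (Fin 5) ℂ)
    (hA : A = Matrix.diagonal ![1, η, η ^ a₃, η ^ a₄, η ^ a₅])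
    (hord : A ^ 5 ≠ 1)
    (F : MvPolynomial (Fin 5) ℂ) (hFh : F.IsHomogeneous 5)
    (hsm : ∀ p : Fin 5 → ℂ, (∀ k, eval p (pderiv k F) = 0) → p = 0)
    (hx15 : coeff (Finsupp.single 0 5) F ≠ 0)
    (hAF : matAct A F = F) : False := by
  set w : Fin 5 → ℕ := ![0, 1, a₃, a₄, a₅] with hw
  have hdvd : ∀ i : Fin 5, ∃ j : Fin 5, (25:ℕ) ∣ 4 * w i + w j := by
    intro i
    obtain ⟨j, hc⟩ := exists_coeff_ne F hFh hsm i
    refine ⟨j, weight_dvd η hη a₃ a₄ a₅ i j F hc ?_⟩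
    conv_lhs => rw [← hAF, hA]
    exact coeff_matAct_diagonal _ _ F
  have harith : False := by
    apply arith (fun i => ((w i : ℕ) : ZMod 25))
    · simp [hw]
    · simp [hw]
    · intro i
      obtain ⟨j, hj⟩ := hdvd i
      refine ⟨j, ?_⟩
      have := (ZMod.natCast_eq_zero_iff (4 * w i + w j) 25).mpr hj
      push_cast at this
      convert this using 2
  exact harith
end
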